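/- arXiv:1912.12478 — 3 statements merged into one kernel-verified Lean document; each statement's English description precedes it below -/
import Mathlib

section
/- Let ψ ∈ L²(X) and let S_Γ(ψ) = closed span{Π_γψ : γ ∈ Γ}. Then: f ∈ L²(X) lies in the orthogonal complement S_Γ(ψ)^⊥ if and only if ⟨Z_Γ[f](ω), Z_Γ[ψ](ω)⟩_{L²(C_Γ)} = 0 for a.e. ω ∈ Ω. -/
open MeasureTheory ENNReal

/-- **Characterization of the orthogonal complement of a principal `(Γ,σ)`-invariant space
via the Zak transform**: `f ∈ S_Γ(ψ)^⊥` iff `⟨Z_Γ[f](ω), Z_Γ[ψ](ω)⟩_{L²(C_Γ)} = 0` a.e. `ω`. -/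
theorem principal_orthogonal_complement {Γ X Γhat : Type*} [AddCommGroup Γ] [Countable Γ]
    [MeasurableSpace X] (μ : Measure X) [SigmaFinite μ]
    [AddCommGroup Γhat] [MeasurableSpace Γhat] (ν : Measure Γhat) [IsProbabilityMeasure ν]
    -- the character pairing of `Γ` with its dual `Γ̂` (identified with `Ω`)
    (p : Γ → Γhat → ℂ)
    (hp1 : ∀ γ γ' ω, p (γ + γ') ω = p γ ω * p γ' ω)
    (hpmeas : ∀ γ, Measurable (p γ))
    (hpnorm : ∀ γ ω, ‖p γ ω‖ = 1)
    (htotal : ∀ F : Γhat → ℂ, Integrable F ν →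
      (∀ γ : Γ, ∫ ω, F ω * p γ ω ∂ν = 0) → F =ᵐ[ν] 0)
    -- the unitary representation `Π` of `Γ` on `L²(X)`
    (Pi : Γ → (Lp ℂ 2 μ ≃ₗᵢ[ℂ] Lp ℂ 2 μ))
    (hPi : ∀ γ γ' f, Pi γ (Pi γ' f) = Pi (γ + γ') f)
    -- the Zak transform `Z_Γ : L²(X) ≃ L²(Ω, L²(C_Γ))` with its intertwining property
    (CΓ : Set X)
    (Z : Lp ℂ 2 μ ≃ₗᵢ[ℂ] Lp (Lp ℂ 2 (μ.restrict CΓ)) 2 ν)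
    (hZ : ∀ (γ : Γ) (f : Lp ℂ 2 μ), ∀ᵐ ω ∂ν,
      (Z (Pi γ f) : Γhat → Lp ℂ 2 (μ.restrict CΓ)) ω
        = p γ ω • (Z f : Γhat → Lp ℂ 2 (μ.restrict CΓ)) ω)
    (ψ : Lp ℂ 2 μ)
    -- `S = S_Γ(ψ)`, the principal `(Γ,σ)`-invariant space generated by `ψ`
    (S : Submodule ℂ (Lp ℂ 2 μ))
    (hS : S = (Submodule.span ℂ {g | ∃ γ : Γ, g = Pi γ ψ}).topologicalClosure) :
    ∀ f : Lp ℂ 2 μ, f ∈ Sᗮ ↔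
      (∀ᵐ ω ∂ν, @inner ℂ _ _ ((Z f : Γhat → Lp ℂ 2 (μ.restrict CΓ)) ω)
        ((Z ψ : Γhat → Lp ℂ 2 (μ.restrict CΓ)) ω) = 0) := by
  intro f
  set F : Γhat → ℂ := fun ω => @inner ℂ _ _ ((Z f : Γhat → Lp ℂ 2 (μ.restrict CΓ)) ω)
    ((Z ψ : Γhat → Lp ℂ 2 (μ.restrict CΓ)) ω) with hF
  have hFint : Integrable F ν := L2.integrable_inner (𝕜 := ℂ) (Z f) (Z ψ)
  have key : ∀ γ : Γ, (@inner ℂ _ _ ((Pi γ) ψ) f)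
      = (starRingEnd ℂ) (∫ ω, F ω * p γ ω ∂ν) := by
    intro γ
    have h1 : (@inner ℂ _ _ ((Pi γ) ψ) f : ℂ) = @inner ℂ _ _ (Z ((Pi γ) ψ)) (Z f) :=
      (Z.inner_map_map _ _).symm
    rw [h1, L2.inner_def, ← integral_conj]
    refine integral_congr_ae ?_
    filter_upwards [hZ γ ψ] with ω hω
    rw [hω, inner_smul_left, map_mul, hF]
    simp only [inner_conj_symm]
    ring
  have horth : f ∈ Sᗮ ↔ ∀ γ : Γ, (@inner ℂ _ _ ((Pi γ) ψ) f : ℂ) = 0 := by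
    rw [hS, ← Submodule.orthogonal_orthogonal_eq_closure,
      Submodule.triorthogonal_eq_orthogonal]
    constructor
    · intro h γ
      exact (Submodule.mem_orthogonal _ f).1 h _ (Submodule.subset_span ⟨γ, rfl⟩)
    · intro h
      rw [Submodule.mem_orthogonal]
      intro u hu
      induction hu using Submodule.span_induction with
      | mem g hg => obtain ⟨γ, rfl⟩ := hg; exact h γ
      | zero => exact inner_zero_left f
      | add x y _ _ hx hy => rw [inner_add_left, hx, hy, add_zero]
      | smul c x _ hx => rw [inner_smul_left, hx, mul_zero]
  rw [horth]
  constructor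
  · intro h
    have hz : ∀ γ : Γ, ∫ ω, F ω * p γ ω ∂ν = 0 := by
      intro γ
      have := (key γ).symm.trans (h γ)
      rw [starRingEnd_apply] at this
      exact star_eq_zero.mp this
    filter_upwards [htotal F hFint hz] with ω hω
    exact hω
  · intro h γ
    rw [key γ]
    have : ∫ ω, F ω * p γ ω ∂ν = 0 := by
      rw [integral_eq_zero_of_ae]
      filter_upwards [h] with ω hω
      simp [hF, hω]
    rw [this, map_zero]
end

section
/- Let ψ ∈ L²(X), let E_ψ = {ω ∈ Ω : Z_Γ[ψ](ω) ≠ 0}, and for g ∈ L²(X) define h_g(ω) = ⟨Z_Γ[g](ω), Z_Γ[ψ](ω)⟩ / ‖Z_Γ[ψ](ω)‖² · 1_{E_ψ}(ω). Let P be the orthogonal projection of L²(X) onto S_Γ(ψ). Then Z_Γ[Pg](ω) = h_g(ω) Z_Γ[ψ](ω) for a.e. ω ∈ Ω. -/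
/-!
Transport everything to the fibres by the unitary `Z`. Since `Z (Π_γ ψ) = p_γ · Z ψ`, each
generator of `S` lies in the closed subspace of those `F` with `F ω ∈ ℂ ∙ Z ψ ω` for a.e. `ω`
(closed because `L²`-limits have a.e.-convergent subsequences), hence so does `Z (Pg)`. On the
other hand `g - Pg ⟂ Π_γ ψ` says that the bracket `⟪Z ψ ω, Z (g - Pg) ω⟫` has vanishing
Fourier coefficients against every `p_γ`, so it vanishes a.e. by totality of the characters. In
each fibre `Z (Pg) ω` is therefore the projection of `Z g ω` onto the line `ℂ ∙ Z ψ ω`.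
-/

open MeasureTheory ENNReal Filter
open scoped InnerProductSpace

section

variable {𝕜 α E : Type*} [RCLike 𝕜] [MeasurableSpace α] {μ : Measure α}

theorem eq_inner_div_smul_of_mem_span_singleton [NormedAddCommGroup E]
    [InnerProductSpace 𝕜 E] {u w : E} (h : w ∈ 𝕜 ∙ u) : w = (⟪u, w⟫_𝕜 / (‖u‖ : 𝕜) ^ 2) • u := by
  conv_lhs =>
    rw [← (𝕜 ∙ u).starProjection_eq_self_iff.mpr h, Submodule.starProjection_singleton]
  push_cast
  rfl

namespace MeasureTheory.Lp

variable [NormedAddCommGroup E] {p : ℝ≥0∞} [Fact (1 ≤ p)]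

theorem isClosed_setOf_ae_mem {K : α → Set E} (hK : ∀ x, IsClosed (K x)) :
    IsClosed {f : Lp E p μ | ∀ᵐ x ∂μ, f x ∈ K x} := by
  refine IsSeqClosed.isClosed fun f f₀ hf h_tendsto ↦ ?_
  obtain ⟨φ, -, hφ⟩ := (tendstoInMeasure_of_tendsto_Lp h_tendsto).exists_seq_tendsto_ae
  filter_upwards [ae_all_iff.mpr fun n ↦ hf (φ n), hφ] with x hx hφx
  exact (hK x).mem_of_tendsto hφx (Eventually.of_forall hx)

variable (𝕜) [NormedSpace 𝕜 E]

def pointwiseSpan (v : α → E) : Submodule 𝕜 (Lp E p μ) where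
  carrier := {f | ∀ᵐ x ∂μ, f x ∈ 𝕜 ∙ v x}
  add_mem' {f g} hf hg := by
    filter_upwards [hf, hg, coeFn_add f g] with x hfx hgx hx
    rw [hx]
    exact add_mem hfx hgx
  zero_mem' := by
    filter_upwards [coeFn_zero E p μ] with x hx
    rw [hx]
    exact zero_mem _
  smul_mem' c f hf := by
    filter_upwards [hf, coeFn_smul c f] with x hfx hx
    rw [hx]
    exact Submodule.smul_mem _ c hfx

theorem isClosed_pointwiseSpan (v : α → E) :
    IsClosed (pointwiseSpan (μ := μ) (p := p) 𝕜 v : Set (Lp E p μ)) :=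
  isClosed_setOf_ae_mem fun x ↦ (𝕜 ∙ v x).closed_of_finiteDimensional

end MeasureTheory.Lp

theorem MeasureTheory.L2.ae_inner_eq_zero_of_forall_inner_eq_zero [NormedAddCommGroup E]
    [InnerProductSpace 𝕜 E] {ι : Type*} {χ : ι → α → 𝕜}
    (hχ : ∀ F : α → 𝕜, Integrable F μ → (∀ i, ∫ x, F x * χ i x ∂μ = 0) → F =ᵐ[μ] 0)
    {v w : Lp E 2 μ}
    (h : ∀ i, ∃ u : Lp E 2 μ, (∀ᵐ x ∂μ, u x = χ i x • v x) ∧ ⟪u, w⟫_𝕜 = 0) :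
    ∀ᵐ x ∂μ, ⟪v x, w x⟫_𝕜 = 0 := by
  -- Totality is applied to the conjugate bracket, whose coefficients are conjugates of `⟪u, w⟫`.
  have hcoeff : ∀ i, ∫ x, ⟪w x, v x⟫_𝕜 * χ i x ∂μ = 0 := by
    intro i
    obtain ⟨u, hu, huw⟩ := h i
    calc ∫ x, ⟪w x, v x⟫_𝕜 * χ i x ∂μ = ∫ x, (starRingEnd 𝕜) ⟪u x, w x⟫_𝕜 ∂μ := by
          refine integral_congr_ae ?_
          filter_upwards [hu] with x hx
          rw [hx, inner_smul_left, map_mul, RCLike.conj_conj, inner_conj_symm, mul_comm]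
      _ = 0 := by rw [integral_conj, ← L2.inner_def, huw, map_zero]
  filter_upwards [hχ _ (L2.integrable_inner w v) hcoeff] with x hx
  exact inner_eq_zero_symm.mp hx

end

open scoped Classical

theorem zak_projection_formula_general {Γ X Γhat : Type*}
    [MeasurableSpace X] (μ : Measure X)
    [MeasurableSpace Γhat] (ν : Measure Γhat)
    (p : Γ → Γhat → ℂ)
    (htotal : ∀ F : Γhat → ℂ, Integrable F ν →
      (∀ γ : Γ, ∫ ω, F ω * p γ ω ∂ν = 0) → F =ᵐ[ν] 0)
    (Pi : Γ → (Lp ℂ 2 μ ≃ₗᵢ[ℂ] Lp ℂ 2 μ))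
    (CΓ : Set X)
    (Z : Lp ℂ 2 μ ≃ₗᵢ[ℂ] Lp (Lp ℂ 2 (μ.restrict CΓ)) 2 ν)
    (hZ : ∀ (γ : Γ) (f : Lp ℂ 2 μ), ∀ᵐ ω ∂ν,
      (Z (Pi γ f) : Γhat → Lp ℂ 2 (μ.restrict CΓ)) ω
        = p γ ω • (Z f : Γhat → Lp ℂ 2 (μ.restrict CΓ)) ω)
    (ψ : Lp ℂ 2 μ)
    (S : Submodule ℂ (Lp ℂ 2 μ))
    (hS : S = (Submodule.span ℂ {g | ∃ γ : Γ, g = Pi γ ψ}).topologicalClosure)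
    -- the function `h_g`, vanishing off `E_ψ = {ω : Z_Γ[ψ](ω) ≠ 0}`
    (hg : Lp ℂ 2 μ → Γhat → ℂ)
    (hhg : ∀ g ω, hg g ω =
      if (Z ψ : Γhat → Lp ℂ 2 (μ.restrict CΓ)) ω = 0 then 0
      else (@inner ℂ _ _ ((Z ψ : Γhat → Lp ℂ 2 (μ.restrict CΓ)) ω)
              ((Z g : Γhat → Lp ℂ 2 (μ.restrict CΓ)) ω))
            / ((‖(Z ψ : Γhat → Lp ℂ 2 (μ.restrict CΓ)) ω‖ : ℂ) ^ 2)) :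
    ∀ g Pg : Lp ℂ 2 μ, Pg ∈ S → g - Pg ∈ Sᗮ →
      ∀ᵐ ω ∂ν, (Z Pg : Γhat → Lp ℂ 2 (μ.restrict CΓ)) ω
        = hg g ω • (Z ψ : Γhat → Lp ℂ 2 (μ.restrict CΓ)) ω := by
  intro g Pg hPg hperp
  have hPi_mem : ∀ γ, Pi γ ψ ∈ S := fun γ ↦
    hS ▸ Submodule.le_topologicalClosure _ (Submodule.subset_span ⟨γ, rfl⟩)
  have hS_le :
      S ≤ (Lp.pointwiseSpan ℂ (Z ψ : Γhat → _)).comap Z.toLinearEquiv.toLinearMap := by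
    rw [hS]
    refine Submodule.topologicalClosure_minimal _ (Submodule.span_le.mpr ?_)
      ((Lp.isClosed_pointwiseSpan ℂ _).preimage Z.continuous)
    rintro _ ⟨γ, rfl⟩
    change ∀ᵐ ω ∂ν, (Z (Pi γ ψ) : Γhat → _) ω ∈ _
    filter_upwards [hZ γ ψ] with ω hω
    rw [hω]
    exact Submodule.smul_mem _ _ (Submodule.mem_span_singleton_self _)
  have hspan : ∀ᵐ ω ∂ν, (Z Pg : Γhat → _) ω ∈ ℂ ∙ (Z ψ : Γhat → _) ω := hS_le hPg
  have horth : ∀ᵐ ω ∂ν, ⟪(Z ψ : Γhat → _) ω, (Z (g - Pg) : Γhat → _) ω⟫_ℂ = 0 :=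
    L2.ae_inner_eq_zero_of_forall_inner_eq_zero htotal fun γ ↦
      ⟨Z (Pi γ ψ), hZ γ ψ, by
        rw [Z.inner_map_map]
        exact Submodule.inner_right_of_mem_orthogonal (hPi_mem γ) hperp⟩
  filter_upwards [hspan, horth, map_sub Z g Pg ▸ Lp.coeFn_sub (Z g) (Z Pg)]
    with ω hmem hψ_perp hsub
  rw [hsub, _root_.Pi.sub_apply, inner_sub_right, sub_eq_zero] at hψ_perp
  rw [eq_inner_div_smul_of_mem_span_singleton hmem, hhg, ← hψ_perp]
  split_ifs with hψ <;> simp [hψ]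

/-- **Zak-transform formula for the orthogonal projection onto a principal space.**
With `h_g(ω) = ⟨Z_Γ[g](ω), Z_Γ[ψ](ω)⟩/‖Z_Γ[ψ](ω)‖² · 1_{E_ψ}(ω)` and `P` the orthogonal
projection onto `S_Γ(ψ)` (characterized by `Pg ∈ S` and `g - Pg ⟂ S`), one has
`Z_Γ[Pg](ω) = h_g(ω) Z_Γ[ψ](ω)` for a.e. `ω`. -/
theorem zak_projection_formula {Γ X Γhat : Type*} [AddCommGroup Γ] [Countable Γ]
    [MeasurableSpace X] (μ : Measure X) [SigmaFinite μ]
    [AddCommGroup Γhat] [MeasurableSpace Γhat] (ν : Measure Γhat) [IsProbabilityMeasure ν]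
    (p : Γ → Γhat → ℂ)
    (hp1 : ∀ γ γ' ω, p (γ + γ') ω = p γ ω * p γ' ω)
    (hpmeas : ∀ γ, Measurable (p γ))
    (hpnorm : ∀ γ ω, ‖p γ ω‖ = 1)
    (htotal : ∀ F : Γhat → ℂ, Integrable F ν →
      (∀ γ : Γ, ∫ ω, F ω * p γ ω ∂ν = 0) → F =ᵐ[ν] 0)
    (Pi : Γ → (Lp ℂ 2 μ ≃ₗᵢ[ℂ] Lp ℂ 2 μ))
    (hPi : ∀ γ γ' f, Pi γ (Pi γ' f) = Pi (γ + γ') f)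
    (CΓ : Set X)
    (Z : Lp ℂ 2 μ ≃ₗᵢ[ℂ] Lp (Lp ℂ 2 (μ.restrict CΓ)) 2 ν)
    (hZ : ∀ (γ : Γ) (f : Lp ℂ 2 μ), ∀ᵐ ω ∂ν,
      (Z (Pi γ f) : Γhat → Lp ℂ 2 (μ.restrict CΓ)) ω
        = p γ ω • (Z f : Γhat → Lp ℂ 2 (μ.restrict CΓ)) ω)
    (ψ : Lp ℂ 2 μ)
    (S : Submodule ℂ (Lp ℂ 2 μ))
    (hS : S = (Submodule.span ℂ {g | ∃ γ : Γ, g = Pi γ ψ}).topologicalClosure)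
    -- the function `h_g`, vanishing off `E_ψ = {ω : Z_Γ[ψ](ω) ≠ 0}`
    (hg : Lp ℂ 2 μ → Γhat → ℂ)
    (hhg : ∀ g ω, hg g ω =
      if (Z ψ : Γhat → Lp ℂ 2 (μ.restrict CΓ)) ω = 0 then 0
      else (@inner ℂ _ _ ((Z ψ : Γhat → Lp ℂ 2 (μ.restrict CΓ)) ω)
              ((Z g : Γhat → Lp ℂ 2 (μ.restrict CΓ)) ω))
            / ((‖(Z ψ : Γhat → Lp ℂ 2 (μ.restrict CΓ)) ω‖ : ℂ) ^ 2)) :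
    ∀ g Pg : Lp ℂ 2 μ, Pg ∈ S → g - Pg ∈ Sᗮ →
      ∀ᵐ ω ∂ν, (Z Pg : Γhat → Lp ℂ 2 (μ.restrict CΓ)) ω
        = hg g ω • (Z ψ : Γhat → Lp ℂ 2 (μ.restrict CΓ)) ω :=
  zak_projection_formula_general μ ν p htotal Pi CΓ Z hZ ψ S hS hg hhg
end

section
/- Let ψ ∈ L²(X). If f ∈ S_Γ(ψ), then there exists a measurable function h on Ω such that Z_Γ[f](ω) = h(ω) Z_Γ[ψ](ω) for a.e. ω ∈ Ω. Conversely, if f ∈ L²(X) satisfies Z_Γ[f](ω) = h(ω) Z_Γ[ψ](ω) a.e. for some measurable h on Ω, then f ∈ S_Γ(ψ). -/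
/-!
Under the Zak transform the orbit `Π_γ ψ` becomes the family `p γ • Z ψ`, so by totality of the
characters a vector `t` is orthogonal to `S_Γ(ψ)` iff `Z t` is fiberwise orthogonal to `Z ψ`.
Hence `f ∈ S_Γ(ψ) = S_Γ(ψ)ᗮᗮ` iff `Z f` is orthogonal to every `L²` section that is fiberwise
orthogonal to `Z ψ`. This holds iff `Z f` is fiberwise a multiple of `Z ψ`: the residual
`R = Z f - h • Z ψ` of the fiberwise orthogonal projection is such a section, and
`⟪R, Z f⟫ = ‖R‖²`.
-/

open MeasureTheory
open scoped InnerProductSpace ComplexConjugate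

theorem conj_eq_apply_neg_of_map_add_of_norm_eq_one {G : Type*} [AddGroup G] {χ : G → ℂ}
    (hmul : ∀ a b, χ (a + b) = χ a * χ b) (hnorm : ∀ a, ‖χ a‖ = 1) (a : G) :
    conj (χ a) = χ (-a) := by
  have hzero : χ 0 = 1 := by
    have hne : χ 0 ≠ 0 := norm_ne_zero_iff.mp (by rw [hnorm]; exact one_ne_zero)
    have h := hmul 0 0
    rw [add_zero] at h
    exact (mul_eq_left₀ hne).mp h.symm
  have hinv : χ (-a) = (χ a)⁻¹ :=
    eq_inv_of_mul_eq_one_right (by rw [← hmul, add_neg_cancel, hzero])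
  rw [hinv, Complex.inv_eq_conj (hnorm a)]

theorem Submodule.mem_orthogonal_span_iff {𝕜 H : Type*} [RCLike 𝕜] [NormedAddCommGroup H]
    [InnerProductSpace 𝕜 H] {s : Set H} {t : H} :
    t ∈ (span 𝕜 s)ᗮ ↔ ∀ u ∈ s, ⟪u, t⟫_𝕜 = 0 := by
  refine ⟨fun ht u hu => (mem_orthogonal _ t).mp ht u (subset_span hu), fun hs => ?_⟩
  rw [mem_orthogonal]
  intro u hu
  induction hu using span_induction with
  | mem x hx => exact hs x hx
  | zero => exact inner_zero_left t
  | add x y _ _ hx hy => rw [inner_add_left, hx, hy, add_zero]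
  | smul c x _ hx => rw [inner_smul_left, hx, mul_zero]

theorem Submodule.mem_topologicalClosure_span_iff {𝕜 H : Type*} [RCLike 𝕜]
    [NormedAddCommGroup H] [InnerProductSpace 𝕜 H] [CompleteSpace H] {s : Set H} {f : H} :
    f ∈ (span 𝕜 s).topologicalClosure ↔ ∀ t, (∀ u ∈ s, ⟪u, t⟫_𝕜 = 0) → ⟪t, f⟫_𝕜 = 0 := by
  rw [← orthogonal_orthogonal_eq_closure, mem_orthogonal]
  simp only [mem_orthogonal_span_iff]

namespace MeasureTheory

variable {α 𝕜 E : Type*} [MeasurableSpace α] {ν : Measure α} [RCLike 𝕜]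
  [NormedAddCommGroup E] [InnerProductSpace 𝕜 E]

-- `h ω • Ψ ω` is the orthogonal projection of `F ω` onto the line spanned by `Ψ ω`.
theorem exists_measurable_smul_add_pointwise_orthogonal {Ψ F : α → E}
    (hΨ : StronglyMeasurable Ψ) (hF : StronglyMeasurable F) (hF2 : MemLp F 2 ν) :
    ∃ h : α → 𝕜, Measurable h ∧ MemLp (fun ω => F ω - h ω • Ψ ω) 2 ν ∧
      ∀ ω, ⟪Ψ ω, F ω - h ω • Ψ ω⟫_𝕜 = 0 := by
  set h : α → 𝕜 := fun ω => ⟪Ψ ω, F ω⟫_𝕜 / ((‖Ψ ω‖ ^ 2 : ℝ) : 𝕜)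
  have hproj : ∀ ω, h ω • Ψ ω = (𝕜 ∙ Ψ ω).starProjection (F ω) := fun ω =>
    (Submodule.starProjection_singleton 𝕜 (F ω)).symm
  have hmeas : Measurable h :=
    (hΨ.inner hF).measurable.div (RCLike.measurable_ofReal.comp (hΨ.norm.measurable.pow_const 2))
  refine ⟨h, hmeas, ?_, fun ω => ?_⟩
  · refine hF2.of_le_mul (c := 2)
      (hF.sub (hmeas.stronglyMeasurable.smul hΨ)).aestronglyMeasurable (ae_of_all _ fun ω => ?_)
    calc ‖F ω - h ω • Ψ ω‖ ≤ ‖F ω‖ + ‖h ω • Ψ ω‖ := norm_sub_le _ _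
      _ ≤ ‖F ω‖ + ‖F ω‖ := by
          rw [hproj]; gcongr; exact Submodule.norm_starProjection_apply_le _ _
      _ = 2 * ‖F ω‖ := by ring
  · rw [hproj, ← Submodule.mem_orthogonal_singleton_iff_inner_right]
    exact Submodule.sub_starProjection_mem_orthogonal _

theorem L2.exists_ae_eq_smul_of_forall_inner_eq_zero {Ψ F : Lp E 2 ν}
    (hF : ∀ R : Lp E 2 ν, (fun ω => ⟪Ψ ω, R ω⟫_𝕜) =ᵐ[ν] 0 → ⟪R, F⟫_𝕜 = 0) :
    ∃ h : α → 𝕜, Measurable h ∧ ∀ᵐ ω ∂ν, F ω = h ω • Ψ ω := by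
  set Ψ' := (Lp.aestronglyMeasurable Ψ).mk _
  set F' := (Lp.aestronglyMeasurable F).mk _
  have hΨ' : Ψ =ᵐ[ν] Ψ' := (Lp.aestronglyMeasurable Ψ).ae_eq_mk
  have hF' : F =ᵐ[ν] F' := (Lp.aestronglyMeasurable F).ae_eq_mk
  obtain ⟨h, hmeas, hr2, horth⟩ := exists_measurable_smul_add_pointwise_orthogonal (𝕜 := 𝕜)
    (Lp.aestronglyMeasurable Ψ).stronglyMeasurable_mk
    (Lp.aestronglyMeasurable F).stronglyMeasurable_mk ((Lp.memLp F).ae_eq hF')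
  set R := hr2.toLp
  have hR : R =ᵐ[ν] fun ω => F' ω - h ω • Ψ' ω := hr2.coeFn_toLp
  have hRF : ⟪R, F⟫_𝕜 = 0 := hF R (by
    filter_upwards [hΨ', hR] with ω hΨω hRω
    rw [Pi.zero_apply, hΨω, hRω, horth])
  -- `R` is pointwise orthogonal to `h • Ψ`, so pairing it with `F = R + h • Ψ` gives `‖R‖²`.
  have hRR : ⟪R, R⟫_𝕜 = ⟪R, F⟫_𝕜 := by
    rw [L2.inner_def, L2.inner_def]
    refine integral_congr_ae ?_
    filter_upwards [hR, hF'] with ω hRω hFω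
    have hdecomp : ⟪F' ω - h ω • Ψ' ω, F' ω - h ω • Ψ' ω + h ω • Ψ' ω⟫_𝕜
        = ⟪F' ω - h ω • Ψ' ω, F' ω - h ω • Ψ' ω⟫_𝕜 := by
      rw [inner_add_right, inner_smul_right, inner_eq_zero_symm.mp (horth ω), mul_zero, add_zero]
    rw [hFω, hRω, ← hdecomp, sub_add_cancel]
  have hR0 : R = 0 := inner_self_eq_zero.mp (hRR.trans hRF)
  refine ⟨h, hmeas, ?_⟩
  filter_upwards [hR, hF', hΨ', hR0 ▸ Lp.coeFn_zero E 2 ν] with ω hRω hFω hΨω hR0ω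
  rw [hFω, hΨω, ← sub_eq_zero, ← hRω, hR0ω, Pi.zero_apply]

theorem L2.inner_eq_zero_of_ae_eq_smul {Ψ F R : Lp E 2 ν} {h : α → 𝕜}
    (hF : ∀ᵐ ω ∂ν, F ω = h ω • Ψ ω) (hR : (fun ω => ⟪Ψ ω, R ω⟫_𝕜) =ᵐ[ν] 0) :
    ⟪R, F⟫_𝕜 = 0 := by
  rw [L2.inner_def]
  refine integral_eq_zero_of_ae ?_
  filter_upwards [hF, hR] with ω hFω hRω
  rw [hFω, inner_smul_right, ← inner_conj_symm, hRω, Pi.zero_apply, map_zero, mul_zero]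

theorem L2.exists_ae_eq_smul_iff_forall_inner_eq_zero {Ψ F : Lp E 2 ν} :
    (∃ h : α → 𝕜, Measurable h ∧ ∀ᵐ ω ∂ν, F ω = h ω • Ψ ω) ↔
      ∀ R : Lp E 2 ν, (fun ω => ⟪Ψ ω, R ω⟫_𝕜) =ᵐ[ν] 0 → ⟪R, F⟫_𝕜 = 0 :=
  ⟨fun ⟨_, _, hF⟩ _ hR => inner_eq_zero_of_ae_eq_smul hF hR,
    exists_ae_eq_smul_of_forall_inner_eq_zero⟩

end MeasureTheory

theorem MeasureTheory.L2.forall_inner_eq_zero_iff_ae_inner_eq_zero {Γ α E : Type*}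
    [AddCommGroup Γ] [MeasurableSpace α] {ν : Measure α} [NormedAddCommGroup E]
    [InnerProductSpace ℂ E] {p : Γ → α → ℂ}
    (hp1 : ∀ γ γ' ω, p (γ + γ') ω = p γ ω * p γ' ω) (hpnorm : ∀ γ ω, ‖p γ ω‖ = 1)
    (htotal : ∀ F : α → ℂ, Integrable F ν → (∀ γ : Γ, ∫ ω, F ω * p γ ω ∂ν = 0) → F =ᵐ[ν] 0)
    {Ψ T : Lp E 2 ν} {Φ : Γ → Lp E 2 ν} (hΦ : ∀ γ, ∀ᵐ ω ∂ν, Φ γ ω = p γ ω • Ψ ω) :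
    (∀ γ, ⟪Φ γ, T⟫_ℂ = 0) ↔ (fun ω => ⟪Ψ ω, T ω⟫_ℂ) =ᵐ[ν] 0 := by
  have hconj : ∀ γ ω, conj (p γ ω) = p (-γ) ω := fun γ ω =>
    conj_eq_apply_neg_of_map_add_of_norm_eq_one (fun a b => hp1 a b ω) (fun a => hpnorm a ω) γ
  have hinner : ∀ γ, ⟪Φ γ, T⟫_ℂ = ∫ ω, ⟪Ψ ω, T ω⟫_ℂ * p (-γ) ω ∂ν := fun γ => by
    rw [L2.inner_def]
    refine integral_congr_ae ?_
    filter_upwards [hΦ γ] with ω hω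
    rw [hω, inner_smul_left, hconj, mul_comm]
  refine ⟨fun hT => htotal _ (L2.integrable_inner Ψ T) fun γ => ?_, fun hT γ => ?_⟩
  · rw [← neg_neg γ, ← hinner, hT]
  · rw [hinner]
    refine integral_eq_zero_of_ae ?_
    filter_upwards [hT] with ω hω
    rw [hω, Pi.zero_apply, zero_mul]

theorem principal_space_characterization_general {Γ X Γhat : Type*} [AddCommGroup Γ]
    [MeasurableSpace X] (μ : Measure X)
    [MeasurableSpace Γhat] (ν : Measure Γhat)
    (p : Γ → Γhat → ℂ)
    (hp1 : ∀ γ γ' ω, p (γ + γ') ω = p γ ω * p γ' ω)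
    (hpnorm : ∀ γ ω, ‖p γ ω‖ = 1)
    (htotal : ∀ F : Γhat → ℂ, Integrable F ν →
      (∀ γ : Γ, ∫ ω, F ω * p γ ω ∂ν = 0) → F =ᵐ[ν] 0)
    (Pi : Γ → (Lp ℂ 2 μ ≃ₗᵢ[ℂ] Lp ℂ 2 μ))
    (CΓ : Set X)
    (Z : Lp ℂ 2 μ ≃ₗᵢ[ℂ] Lp (Lp ℂ 2 (μ.restrict CΓ)) 2 ν)
    (hZ : ∀ (γ : Γ) (f : Lp ℂ 2 μ), ∀ᵐ ω ∂ν,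
      (Z (Pi γ f) : Γhat → Lp ℂ 2 (μ.restrict CΓ)) ω
        = p γ ω • (Z f : Γhat → Lp ℂ 2 (μ.restrict CΓ)) ω)
    (ψ : Lp ℂ 2 μ)
    (S : Submodule ℂ (Lp ℂ 2 μ))
    (hS : S = (Submodule.span ℂ {g | ∃ γ : Γ, g = Pi γ ψ}).topologicalClosure) :
    ∀ f : Lp ℂ 2 μ, f ∈ S ↔
      ∃ h : Γhat → ℂ, Measurable h ∧ ∀ᵐ ω ∂ν,
        (Z f : Γhat → Lp ℂ 2 (μ.restrict CΓ)) ω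
          = h ω • (Z ψ : Γhat → Lp ℂ 2 (μ.restrict CΓ)) ω := by
  intro f
  have horbit : ∀ t, (∀ γ, ⟪Pi γ ψ, t⟫_ℂ = 0) ↔ (fun ω => ⟪Z ψ ω, Z t ω⟫_ℂ) =ᵐ[ν] 0 := by
    intro t
    simp_rw [← Z.inner_map_map (Pi _ ψ)]
    exact L2.forall_inner_eq_zero_iff_ae_inner_eq_zero hp1 hpnorm htotal (hZ · ψ)
  rw [hS, Submodule.mem_topologicalClosure_span_iff, L2.exists_ae_eq_smul_iff_forall_inner_eq_zero]
  refine Iff.trans (forall_congr' fun t => ?_) Z.surjective.forall.symm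
  have horbit_mem : (∀ u ∈ {g | ∃ γ : Γ, g = Pi γ ψ}, ⟪u, t⟫_ℂ = 0) ↔ ∀ γ, ⟪Pi γ ψ, t⟫_ℂ = 0 := by
    simp
  rw [horbit_mem, horbit, Z.inner_map_map]

/-- **Characterization of principal `(Γ,σ)`-invariant spaces via the Zak transform**:
`f ∈ S_Γ(ψ)` iff `Z_Γ[f](ω) = h(ω) Z_Γ[ψ](ω)` a.e. for some measurable `h` on `Ω`. -/
theorem principal_space_characterization {Γ X Γhat : Type*} [AddCommGroup Γ] [Countable Γ]
    [MeasurableSpace X] (μ : Measure X) [SigmaFinite μ]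
    [AddCommGroup Γhat] [MeasurableSpace Γhat] (ν : Measure Γhat) [IsProbabilityMeasure ν]
    (p : Γ → Γhat → ℂ)
    (hp1 : ∀ γ γ' ω, p (γ + γ') ω = p γ ω * p γ' ω)
    (hpmeas : ∀ γ, Measurable (p γ))
    (hpnorm : ∀ γ ω, ‖p γ ω‖ = 1)
    (htotal : ∀ F : Γhat → ℂ, Integrable F ν →
      (∀ γ : Γ, ∫ ω, F ω * p γ ω ∂ν = 0) → F =ᵐ[ν] 0)
    (Pi : Γ → (Lp ℂ 2 μ ≃ₗᵢ[ℂ] Lp ℂ 2 μ))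
    (hPi : ∀ γ γ' f, Pi γ (Pi γ' f) = Pi (γ + γ') f)
    (CΓ : Set X)
    (Z : Lp ℂ 2 μ ≃ₗᵢ[ℂ] Lp (Lp ℂ 2 (μ.restrict CΓ)) 2 ν)
    (hZ : ∀ (γ : Γ) (f : Lp ℂ 2 μ), ∀ᵐ ω ∂ν,
      (Z (Pi γ f) : Γhat → Lp ℂ 2 (μ.restrict CΓ)) ω
        = p γ ω • (Z f : Γhat → Lp ℂ 2 (μ.restrict CΓ)) ω)
    (ψ : Lp ℂ 2 μ)
    (S : Submodule ℂ (Lp ℂ 2 μ))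
    (hS : S = (Submodule.span ℂ {g | ∃ γ : Γ, g = Pi γ ψ}).topologicalClosure) :
    ∀ f : Lp ℂ 2 μ, f ∈ S ↔
      ∃ h : Γhat → ℂ, Measurable h ∧ ∀ᵐ ω ∂ν,
        (Z f : Γhat → Lp ℂ 2 (μ.restrict CΓ)) ω
          = h ω • (Z ψ : Γhat → Lp ℂ 2 (μ.restrict CΓ)) ω :=
  principal_space_characterization_general μ ν p hp1 hpnorm htotal Pi CΓ Z hZ ψ S hS
end
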